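/- If the exact reduced time derivatives are supplied, i.e. ẋ̂_p = K_r x̂_p + B_r g_p for each data point p, and the data matrix D has full column rank, then the unique minimizer of the operator inference least squares problem recovers the intrusive Galerkin operators exactly: K̂ = K_r and B̂ = B_r. -/
import Mathlib

open Matrix

lemma full_rank_mulVec_zero (j r m : ℕ) (D : Matrix (Fin j) (Fin r ⊕ Fin m) ℝ)
    (hrank : D.rank = r + m) (c : Fin r ⊕ Fin m → ℝ) (h : D *ᵥ c = 0) : c = 0 := by
  have hinj : Function.Injective D.mulVecLin := by
    rw [← LinearMap.ker_eq_bot]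
    have hsum := LinearMap.finrank_range_add_finrank_ker D.mulVecLin
    rw [Matrix.rank] at hrank
    have hdom : Module.finrank ℝ ((Fin r ⊕ Fin m) → ℝ) = r + m := by simp
    rw [hrank, hdom] at hsum
    have : Module.finrank ℝ (LinearMap.ker D.mulVecLin) = 0 := by omega
    exact Submodule.finrank_eq_zero.mp this
  exact hinj (a₂ := 0) (by simpa using h)

/-- if the exact reduced time derivatives ẋ̂_p = K_r x̂_p + B_r g_p
are supplied and the data matrix D has full column rank, then the operator
inference least squares problem recovers the intrusive Galerkin operators
exactly: its unique minimizer is (K̂, B̂) = (K_r, B_r). -/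
theorem opinf_recovers_galerkin_operators
    (j r m : ℕ)
    (Kr : Matrix (Fin r) (Fin r) ℝ) (Br : Matrix (Fin r) (Fin m) ℝ)
    (xhat : Fin j → Fin r → ℝ)
    (g : Fin j → Fin m → ℝ)
    (xdot : Fin j → Fin r → ℝ)
    (hdata : ∀ p, xdot p = Kr *ᵥ xhat p + Br *ᵥ g p)
    (D : Matrix (Fin j) (Fin r ⊕ Fin m) ℝ)
    (hD : ∀ p, (∀ i : Fin r, D p (Sum.inl i) = xhat p i) ∧
               (∀ i : Fin m, D p (Sum.inr i) = g p i))
    (hrank : D.rank = r + m) :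
    (∀ (K' : Matrix (Fin r) (Fin r) ℝ) (B' : Matrix (Fin r) (Fin m) ℝ),
      (∑ p, ∑ i, (xdot p i - (Kr *ᵥ xhat p) i - (Br *ᵥ g p) i) ^ 2)
        ≤ (∑ p, ∑ i, (xdot p i - (K' *ᵥ xhat p) i - (B' *ᵥ g p) i) ^ 2)) ∧
    (∀ (Khat : Matrix (Fin r) (Fin r) ℝ) (Bhat : Matrix (Fin r) (Fin m) ℝ),
      (∀ (K' : Matrix (Fin r) (Fin r) ℝ) (B' : Matrix (Fin r) (Fin m) ℝ),
        (∑ p, ∑ i, (xdot p i - (Khat *ᵥ xhat p) i - (Bhat *ᵥ g p) i) ^ 2)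
          ≤ (∑ p, ∑ i, (xdot p i - (K' *ᵥ xhat p) i - (B' *ᵥ g p) i) ^ 2)) →
      Khat = Kr ∧ Bhat = Br) := by
  have hzero : (∑ p, ∑ i, (xdot p i - (Kr *ᵥ xhat p) i - (Br *ᵥ g p) i) ^ 2) = 0 := by
    apply Finset.sum_eq_zero; intro p _
    apply Finset.sum_eq_zero; intro i _
    rw [hdata p]; simp
  constructor
  · intro K' B'
    rw [hzero]
    positivity
  · intro Khat Bhat hmin
    have hle := hmin Kr Br
    rw [hzero] at hle
    have hS : (∑ p, ∑ i, (xdot p i - (Khat *ᵥ xhat p) i - (Bhat *ᵥ g p) i) ^ 2) = 0 := by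
      have : (0:ℝ) ≤ ∑ p, ∑ i, (xdot p i - (Khat *ᵥ xhat p) i - (Bhat *ᵥ g p) i) ^ 2 := by
        positivity
      linarith
    have hres : ∀ p i, xdot p i - (Khat *ᵥ xhat p) i - (Bhat *ᵥ g p) i = 0 := by
      intro p i
      have h1 := (Finset.sum_eq_zero_iff_of_nonneg (fun p _ => by positivity)).mp hS p
        (Finset.mem_univ p)
      have h2 := (Finset.sum_eq_zero_iff_of_nonneg (fun i _ => by positivity)).mp h1 i
        (Finset.mem_univ i)
      exact pow_eq_zero_iff (by norm_num) |>.mp h2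
    -- entrywise equality via full rank
    have key : ∀ i : Fin r,
        (Sum.elim (fun k => Kr i k - Khat i k) (fun k => Br i k - Bhat i k) : Fin r ⊕ Fin m → ℝ)
          = 0 := by
      intro i
      apply full_rank_mulVec_zero j r m D hrank
      funext p
      have hr := hres p i
      rw [hdata p] at hr
      simp only [Pi.add_apply] at hr
      simp only [mulVec, dotProduct, Pi.zero_apply, Fintype.sum_sum_type, Sum.elim_inl,
        Sum.elim_inr, (hD p).1, (hD p).2]
      simp only [mulVec, dotProduct] at hr
      have e1 : ∑ x, xhat p x * (Kr i x - Khat i x)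
          = (∑ x, Kr i x * xhat p x) - ∑ x, Khat i x * xhat p x := by
        rw [← Finset.sum_sub_distrib]; exact Finset.sum_congr rfl (fun x _ => by ring)
      have e2 : ∑ x, g p x * (Br i x - Bhat i x)
          = (∑ x, Br i x * g p x) - ∑ x, Bhat i x * g p x := by
        rw [← Finset.sum_sub_distrib]; exact Finset.sum_congr rfl (fun x _ => by ring)
      rw [e1, e2]
      linarith
    constructor
    · ext i k
      have := congrFun (key i) (Sum.inl k)
      simp at this; linarith
    · ext i k
      have := congrFun (key i) (Sum.inr k)
      simp at this; linarith
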